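/- For every n ≥ 1 and d ≥ 1, the Lie algebra 𝔰𝔩_n(ℂ[u^{±1},v]⋊Γ) is isomorphic, as a Lie algebra over ℂ, to 𝔰𝔩_{nd}(ℂ[s^{±1},t]), where ℂ[s^{±1},t] is the ring of polynomials in t with coefficients in the Laurent polynomial ring ℂ[s^{±1}]. -/

import Mathlib

/-!
STATEMENT 12: For every `n ≥ 1` and `d ≥ 1`, the Lie algebra `𝔰𝔩_n(ℂ[u^{±1}, v] ⋊ Γ)`
is isomorphic, as a Lie algebra over ℂ, to `𝔰𝔩_{nd}(ℂ[s^{±1}][t])`, where `ℂ[s^{±1}][t]`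
is the ring of polynomials in `t` over the Laurent polynomial ring `ℂ[s^{±1}]`.

The algebra `ℂ[u^{±1}, v] ⋊ Γ` (the subalgebra of `ℂ[u^{±1}, v^{±1}] ⋊ Γ` spanned by the
`u^a v^b ξ^c` with `b ≥ 0`) is formalized abstractly: any ℂ-algebra with a ℂ-basis
`b a b' c` (`a ∈ ℤ`, `b' ∈ ℕ`, `c ∈ ℤ/dℤ`, representing `u^a v^{b'} ξ^c`) satisfying
the multiplication rule `(u^a v^b ξ^c)·(u^e v^f ξ^g) = ζ^{c(e−f)} u^{a+e} v^{b+f} ξ^{c+g}`.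
-/

/-- Data exhibiting `B` as the skew group algebra `ℂ[u^{±1}, v] ⋊ (ℤ/dℤ)`,
where `b a b' c` represents the basis element `u^a v^{b'} ξ^c`. -/
structure SkewMixedAlgebra (d : ℕ) (ζ : ℂ) (B : Type) [Ring B] [Algebra ℂ B] where
  b : ℤ → ℕ → ZMod d → B
  basis : Module.Basis (ℤ × ℕ × ZMod d) ℂ B
  basis_eq : ∀ (a : ℤ) (b' : ℕ) (c : ZMod d), basis (a, b', c) = b a b' c
  b_one : b 0 0 0 = 1
  b_mul : ∀ (a : ℤ) (b' : ℕ) (c : ZMod d) (e : ℤ) (f : ℕ) (g : ZMod d),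
    b a b' c * b e f g = (ζ ^ ((c.val : ℤ) * (e - (f : ℤ)))) • b (a + e) (b' + f) (c + g)

attribute [local instance 100] LieRing.ofAssociativeRing

/-!
Put `s = u^d` and `t = uv`. Then `ℂ[u^{±1}, v] = ⊕_{j ∈ ℤ/d} u^j ℂ[s^{±1}, t]` is free of rank `d`
over `ℂ[s^{±1}, t]`, and `u`, `v`, `ξ` act on it `ℂ[s^{±1}, t]`-linearly (`ξ` fixes `s` and `t`).
This gives an algebra map `B → M_d(ℂ[s^{±1}, t])`; it is bijective because the images of the
`u^a v^b ξ^c` for fixed `a, b` are the `d` characters of `Γ` applied to a monomial matrix, so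
Fourier inversion over `Γ` recovers the matrix units. Hence
`M_n(B) ≅ M_{nd}(ℂ[s^{±1}, t])` as algebras, so as Lie algebras, and a Lie algebra isomorphism
maps the derived algebra onto the derived algebra.
-/

open Polynomial LaurentPolynomial

section ZModCharacters

variable {d : ℕ} [NeZero d]

theorem ZMod.dvd_sub_val_iff (x : ℤ) (l : ZMod d) : (d : ℤ) ∣ x - l.val ↔ l = x := by
  rw [← ZMod.intCast_eq_intCast_iff_dvd_sub, Int.cast_natCast, ZMod.natCast_zmod_val]

theorem ZMod.val_intCast_add_mul_ediv (x : ℤ) : ((x : ZMod d).val : ℤ) + d * (x / d) = x := by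
  rw [ZMod.val_intCast, Int.emod_add_mul_ediv]

theorem ZMod.sum_ite_dvd_sub_val {M : Type*} [AddCommMonoid M] (x : ℤ) (f : ZMod d → M) :
    ∑ l : ZMod d, (if (d : ℤ) ∣ x - l.val then f l else 0) = f x := by
  simp_rw [ZMod.dvd_sub_val_iff, Finset.sum_ite_eq', Finset.mem_univ, if_true]

theorem ZMod.sum_univ_eq_sum_range_val {M : Type*} [AddCommMonoid M] (f : ℕ → M) :
    ∑ c : ZMod d, f c.val = ∑ i ∈ Finset.range d, f i :=
  Finset.sum_nbij' (fun c => c.val) (fun i => (i : ZMod d))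
    (fun c _ => Finset.mem_range.2 c.val_lt) (fun _ _ => Finset.mem_univ _)
    (fun c _ => ZMod.natCast_zmod_val c)
    (fun _ hi => ZMod.val_cast_of_lt (Finset.mem_range.1 hi)) (fun _ _ => rfl)

variable {K : Type*} [Field K] {ζ : K}

theorem IsPrimitiveRoot.zpow_eq_zpow_of_intCast_eq (hζ : IsPrimitiveRoot ζ d) {x y : ℤ}
    (h : (x : ZMod d) = y) : ζ ^ x = ζ ^ y := by
  rw [ZMod.intCast_eq_intCast_iff_dvd_sub] at h
  rw [← sub_add_cancel y x, zpow_add₀ (hζ.ne_zero (NeZero.ne d)),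
    (hζ.zpow_eq_one_iff_dvd _).2 h, one_mul]

theorem IsPrimitiveRoot.sum_zpow_val_mul (hζ : IsPrimitiveRoot ζ d) (m : ℤ) :
    ∑ c : ZMod d, ζ ^ ((c.val : ℤ) * m) = if (d : ℤ) ∣ m then (d : K) else 0 := by
  rw [ZMod.sum_univ_eq_sum_range_val (fun i => ζ ^ ((i : ℤ) * m))]
  split_ifs with h
  · simp [fun i : ℕ => (hζ.zpow_eq_one_iff_dvd ((i : ℤ) * m)).2 (h.mul_left _)]
  · have hm : ζ ^ m ≠ 1 := fun h' => h ((hζ.zpow_eq_one_iff_dvd m).1 h')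
    have hmd : (ζ ^ m) ^ d = 1 := by
      rw [← zpow_natCast, ← zpow_mul, mul_comm, zpow_mul, zpow_natCast, hζ.pow_eq_one, one_zpow]
    simp_rw [mul_comm _ m, zpow_mul, zpow_natCast]
    rw [geom_sum_eq hm, hmd, sub_self, zero_div]

theorem IsPrimitiveRoot.sum_zpow_inv_mul_zpow (hζ : IsPrimitiveRoot ζ d) (x y : ZMod d) :
    ∑ c : ZMod d, (ζ ^ ((x.val : ℤ) * c.val))⁻¹ * ζ ^ ((y.val : ℤ) * c.val) =
      if x = y then (d : K) else 0 := by
  have hterm (c : ZMod d) : (ζ ^ ((x.val : ℤ) * c.val))⁻¹ * ζ ^ ((y.val : ℤ) * c.val) =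
      ζ ^ ((c.val : ℤ) * (y.val - x.val)) := by
    rw [← zpow_neg, ← zpow_add₀ (hζ.ne_zero (NeZero.ne d))]
    ring_nf
  simp only [hterm, hζ.sum_zpow_val_mul, ZMod.dvd_sub_val_iff, Int.cast_natCast,
    ZMod.natCast_zmod_val]

end ZModCharacters

theorem LinearMap.map_mul_of_basis {ι R A A' : Type*} [CommSemiring R] [Semiring A]
    [Algebra R A] [Semiring A'] [Algebra R A'] (b : Module.Basis ι R A) (f : A →ₗ[R] A')
    (h : ∀ i j, f (b i * b j) = f (b i) * f (b j)) (x y : A) : f (x * y) = f x * f y := by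
  have : (LinearMap.mul R A).compr₂ f = (LinearMap.mul R A').compl₁₂ f f :=
    b.ext fun i => b.ext fun j => h i j
  exact congr($this x y)

section DerivedAlgebra

variable {R L L' : Type*} [CommRing R] [LieRing L] [LieAlgebra R L] [LieRing L']
  [LieAlgebra R L']

theorem LieEquiv.map_derivedAlgebra (e : L ≃ₗ⁅R⁆ L') :
    (⁅(⊤ : LieIdeal R L), ⊤⁆ : LieIdeal R L).toLieSubalgebra.map (e : L →ₗ⁅R⁆ L') =
      (⁅(⊤ : LieIdeal R L'), ⊤⁆ : LieIdeal R L').toLieSubalgebra := by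
  have hmap := LieIdeal.map_bracket_eq (e : L →ₗ⁅R⁆ L') e.surjective (I₁ := ⊤) (I₂ := ⊤)
  rw [← LieHom.idealRange_eq_map, LieHom.idealRange_eq_top_of_surjective _ e.surjective] at hmap
  rw [← hmap]
  ext x
  exact (SetLike.ext_iff.1 (LieIdeal.coe_map_of_surjective e.surjective) x).symm

def LieEquiv.derivedAlgebraEquiv (e : L ≃ₗ⁅R⁆ L') :
    (⁅(⊤ : LieIdeal R L), (⊤ : LieIdeal R L)⁆ : LieIdeal R L) ≃ₗ⁅R⁆
      (⁅(⊤ : LieIdeal R L'), (⊤ : LieIdeal R L')⁆ : LieIdeal R L') :=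
  e.ofSubalgebras _ _ e.map_derivedAlgebra

end DerivedAlgebra

noncomputable section SkewMatrix

variable {d : ℕ}

def dvdMonomial (d : ℕ) (x : ℤ) : LaurentPolynomial ℂ := if (d : ℤ) ∣ x then T (x / d) else 0

theorem dvdMonomial_mul (x y : ℤ) :
    dvdMonomial d x * dvdMonomial d y = if (d : ℤ) ∣ y then dvdMonomial d (x + y) else 0 := by
  unfold dvdMonomial
  by_cases hy : (d : ℤ) ∣ y
  · by_cases hx : (d : ℤ) ∣ x
    · rw [if_pos hx, if_pos hy, if_pos hy, if_pos (dvd_add hx hy), ← T_add,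
        Int.add_ediv_of_dvd_left hx]
    · have hxy : ¬ (d : ℤ) ∣ x + y := fun h => hx (by simpa using dvd_sub h hy)
      simp only [hx, hy, hxy, if_true, if_false, zero_mul]
  · rw [if_neg hy, if_neg hy, mul_zero]

variable [NeZero d]

theorem dvdMonomial_sub_val (x : ℤ) (l : ZMod d) :
    dvdMonomial d (x - l.val) = if l = x then T (x / d) else 0 := by
  unfold dvdMonomial
  simp only [ZMod.dvd_sub_val_iff]
  split_ifs with h
  · rw [h, ZMod.val_intCast, Int.emod_def, sub_sub_cancel,
      Int.mul_ediv_cancel_left _ (by exact_mod_cast NeZero.ne d)]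
  · rfl

/-- Entry `(i, j)` is the coefficient of `u^i` in `u^a v^b ξ^c · u^j = ζ^{jc} u^{a-b+j} t^b`,
in the basis `(u^i)_{i ∈ ZMod d}` of `ℂ[u^{±1}, v]` over `ℂ[s^{±1}][t]`. -/
def skewMatrix (ζ : ℂ) (a : ℤ) (b : ℕ) (c : ZMod d) :
    Matrix (ZMod d) (ZMod d) (LaurentPolynomial ℂ)[X] :=
  Matrix.of fun i j =>
    ζ ^ ((j.val : ℤ) * c.val) • monomial b (dvdMonomial d (a - b + j.val - i.val))

theorem skewMatrix_zero (ζ : ℂ) : skewMatrix ζ 0 0 (0 : ZMod d) = 1 := by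
  ext1 i j
  have hj : (((j.val : ℤ) : ZMod d)) = j := by simp
  simp only [skewMatrix, Matrix.of_apply, ZMod.val_zero, Nat.cast_zero, mul_zero, zpow_zero,
    one_smul, sub_zero, zero_add, dvdMonomial_sub_val, hj, Matrix.one_apply]
  split_ifs with h
  · rw [Int.ediv_eq_zero_of_lt (Int.natCast_nonneg _) (by exact_mod_cast j.val_lt), T_zero,
      monomial_zero_one]
  · simp

theorem skewMatrix_mul {ζ : ℂ} (hζ : IsPrimitiveRoot ζ d) (a : ℤ) (b : ℕ) (c : ZMod d) (e : ℤ)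
    (f : ℕ) (g : ZMod d) :
    skewMatrix ζ a b c * skewMatrix ζ e f g =
      ζ ^ ((c.val : ℤ) * (e - f)) • skewMatrix ζ (a + e) (b + f) (c + g) := by
  ext1 i j
  simp only [Matrix.mul_apply, skewMatrix, Matrix.of_apply, Matrix.smul_apply, smul_mul_smul_comm,
    monomial_mul_monomial, dvdMonomial_mul, smul_smul]
  refine (Finset.sum_congr rfl fun l _ => ?_).trans
    (ZMod.sum_ite_dvd_sub_val (d := d) (M := (LaurentPolynomial ℂ)[X]) (e - f + j.val) fun _ => _)
  split_ifs with h
  · rw [ZMod.dvd_sub_val_iff] at h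
    congr 1
    · rw [← zpow_add₀ (hζ.ne_zero (NeZero.ne d)), ← zpow_add₀ (hζ.ne_zero (NeZero.ne d))]
      apply hζ.zpow_eq_zpow_of_intCast_eq
      push_cast [h, ZMod.natCast_zmod_val]
      ring
    · congr 2
      push_cast
      ring
  · simp

theorem skewMatrix_eq_sum (ζ : ℂ) (a : ℤ) (b : ℕ) (c : ZMod d) :
    skewMatrix ζ a b c = ∑ j : ZMod d, ζ ^ ((j.val : ℤ) * c.val) •
      Matrix.single ((a - b + j.val : ℤ) : ZMod d) j (monomial b (T ((a - b + j.val) / d))) := by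
  ext1 i j
  simp only [skewMatrix, Matrix.of_apply, Matrix.sum_apply, Matrix.smul_apply, Matrix.single_apply,
    dvdMonomial_sub_val]
  rw [Fintype.sum_eq_single j fun l hl => by simp [hl]]
  by_cases h : i = ((a - b + j.val : ℤ) : ZMod d)
  · rw [if_pos h, if_pos ⟨h.symm, rfl⟩]
  · rw [if_neg h, if_neg fun h' => h h'.1.symm, map_zero, smul_zero]

def matrixMonomialBasis : Module.Basis ((ℤ × ℕ) × ZMod d × ZMod d) ℂ
    (Matrix (ZMod d) (ZMod d) (LaurentPolynomial ℂ)[X]) :=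
  ((AddMonoidAlgebra.basis ℤ ℂ).smulTower (basisMonomials (LaurentPolynomial ℂ))).smulTower
    (Matrix.stdBasis _ _ _)

theorem matrixMonomialBasis_apply (k : ℤ) (b : ℕ) (i j : ZMod d) :
    matrixMonomialBasis ((k, b), (i, j)) = Matrix.single i j (monomial b (T k)) := by
  simp [matrixMonomialBasis, Module.Basis.smulTower_apply, Matrix.stdBasis_eq_single,
    smul_monomial]

end SkewMatrix

namespace SkewMixedAlgebra

noncomputable section

variable {d : ℕ} {ζ : ℂ} {B : Type} [Ring B] [Algebra ℂ B] (S : SkewMixedAlgebra d ζ B)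

def toMatrix : B →ₗ[ℂ] Matrix (ZMod d) (ZMod d) (LaurentPolynomial ℂ)[X] :=
  S.basis.constr ℂ fun p => skewMatrix ζ p.1 p.2.1 p.2.2

theorem toMatrix_b (a : ℤ) (b : ℕ) (c : ZMod d) : S.toMatrix (S.b a b c) = skewMatrix ζ a b c := by
  rw [← S.basis_eq, toMatrix, Module.Basis.constr_basis]

variable [NeZero d]

/-- The preimage of `Matrix.single (x : ZMod d) j (s^{x / d} t^b)`, by Fourier inversion
over `Γ`. -/
def matrixUnit (x : ℤ) (b : ℕ) (j : ZMod d) : B :=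
  (d : ℂ)⁻¹ • ∑ c : ZMod d, (ζ ^ ((j.val : ℤ) * c.val))⁻¹ • S.b (x - j.val + b) b c

def ofMatrix : Matrix (ZMod d) (ZMod d) (LaurentPolynomial ℂ)[X] →ₗ[ℂ] B :=
  matrixMonomialBasis.constr ℂ fun q => S.matrixUnit (q.2.1.val + d * q.1.1) q.1.2 q.2.2

theorem ofMatrix_single (x : ℤ) (b : ℕ) (j : ZMod d) :
    S.ofMatrix (Matrix.single (x : ZMod d) j (monomial b (T (x / d)))) = S.matrixUnit x b j := by
  rw [← matrixMonomialBasis_apply, ofMatrix, Module.Basis.constr_basis,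
    ZMod.val_intCast_add_mul_ediv]

theorem toMatrix_matrixUnit (hζ : IsPrimitiveRoot ζ d) (x : ℤ) (b : ℕ) (j : ZMod d) :
    S.toMatrix (S.matrixUnit x b j) = Matrix.single (x : ZMod d) j (monomial b (T (x / d))) := by
  ext1 i' j'
  simp only [matrixUnit, map_smul, map_sum, toMatrix_b, Matrix.smul_apply, Matrix.sum_apply,
    skewMatrix, Matrix.of_apply, smul_smul, ← Finset.sum_smul]
  rw [hζ.sum_zpow_inv_mul_zpow, Matrix.single_apply]
  by_cases hj : j = j'
  · subst hj
    rw [if_pos rfl, inv_mul_cancel₀ (NeZero.ne (d : ℂ)), one_smul,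
      show x - j.val + b - b + j.val - i'.val = x - i'.val by ring, dvdMonomial_sub_val]
    simp only [eq_comm, and_true, apply_ite (monomial b), map_zero]
  · rw [if_neg hj, mul_zero, zero_smul, if_neg fun h => hj h.2]

theorem ofMatrix_skewMatrix (hζ : IsPrimitiveRoot ζ d) (a : ℤ) (b : ℕ) (c : ZMod d) :
    S.ofMatrix (skewMatrix ζ a b c) = S.b a b c := by
  simp only [skewMatrix_eq_sum, map_sum, map_smul, ofMatrix_single, matrixUnit, Finset.smul_sum,
    smul_smul, add_sub_cancel_right, sub_add_cancel]
  rw [Finset.sum_comm]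
  have hcoef (c' : ZMod d) :
      ∑ j : ZMod d, ζ ^ ((j.val : ℤ) * c.val) * ((d : ℂ)⁻¹ * (ζ ^ ((j.val : ℤ) * c'.val))⁻¹) =
        if c' = c then 1 else 0 := by
    trans (d : ℂ)⁻¹ * ∑ j : ZMod d, (ζ ^ ((c'.val : ℤ) * j.val))⁻¹ * ζ ^ ((c.val : ℤ) * j.val)
    · rw [Finset.mul_sum]
      refine Finset.sum_congr rfl fun j _ => ?_
      rw [mul_comm (c'.val : ℤ), mul_comm (c.val : ℤ)]
      ring
    · rw [hζ.sum_zpow_inv_mul_zpow]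
      split_ifs
      · exact inv_mul_cancel₀ (NeZero.ne (d : ℂ))
      · exact mul_zero _
  simp only [← Finset.sum_smul, hcoef, ite_smul, one_smul, zero_smul, Finset.sum_ite_eq',
    Finset.mem_univ, if_true]

theorem toMatrix_one : S.toMatrix 1 = 1 := by
  rw [← S.b_one, toMatrix_b, skewMatrix_zero]

theorem toMatrix_mul (hζ : IsPrimitiveRoot ζ d) (x y : B) :
    S.toMatrix (x * y) = S.toMatrix x * S.toMatrix y :=
  LinearMap.map_mul_of_basis S.basis _ (fun ⟨a, b, c⟩ ⟨e, f, g⟩ => by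
    simp only [S.basis_eq, S.b_mul, map_smul, toMatrix_b, skewMatrix_mul hζ]) x y

theorem toMatrix_comp_ofMatrix (hζ : IsPrimitiveRoot ζ d) : S.toMatrix ∘ₗ S.ofMatrix = .id :=
  matrixMonomialBasis.ext fun ⟨⟨k, b⟩, i, j⟩ => by
    have hi : (((i.val : ℤ) + d * k : ℤ) : ZMod d) = i := by simp
    have hk : ((i.val : ℤ) + d * k) / d = k := by
      rw [Int.add_mul_ediv_left _ _ (by exact_mod_cast NeZero.ne d),
        Int.ediv_eq_zero_of_lt (Int.natCast_nonneg _) (by exact_mod_cast i.val_lt), zero_add]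
    rw [LinearMap.comp_apply, ofMatrix, Module.Basis.constr_basis, toMatrix_matrixUnit S hζ, hi, hk,
      matrixMonomialBasis_apply, LinearMap.id_apply]

theorem ofMatrix_comp_toMatrix (hζ : IsPrimitiveRoot ζ d) : S.ofMatrix ∘ₗ S.toMatrix = .id :=
  S.basis.ext fun ⟨a, b, c⟩ => by
    rw [LinearMap.comp_apply, S.basis_eq, toMatrix_b, ofMatrix_skewMatrix S hζ, LinearMap.id_apply]

def toMatrixAlgEquiv (hζ : IsPrimitiveRoot ζ d) :
    B ≃ₐ[ℂ] Matrix (ZMod d) (ZMod d) (LaurentPolynomial ℂ)[X] :=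
  .ofLinearEquiv (.ofLinearMap S.toMatrix S.ofMatrix (S.toMatrix_comp_ofMatrix hζ)
    (S.ofMatrix_comp_toMatrix hζ)) S.toMatrix_one (S.toMatrix_mul hζ)

end

end SkewMixedAlgebra

theorem stmt_12_general (d : ℕ) (hd : 0 < d) (ζ : ℂ) (hζ : IsPrimitiveRoot ζ d)
    (B : Type) [Ring B] [Algebra ℂ B] (S : SkewMixedAlgebra d ζ B)
    (n : ℕ) :
    Nonempty
      ((⁅(⊤ : LieIdeal ℂ (Matrix (Fin n) (Fin n) B)),
          (⊤ : LieIdeal ℂ (Matrix (Fin n) (Fin n) B))⁆ :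
          LieIdeal ℂ (Matrix (Fin n) (Fin n) B))
        ≃ₗ⁅ℂ⁆
        (⁅(⊤ : LieIdeal ℂ (Matrix (Fin (n * d)) (Fin (n * d))
              (Polynomial (LaurentPolynomial ℂ)))),
          (⊤ : LieIdeal ℂ (Matrix (Fin (n * d)) (Fin (n * d))
              (Polynomial (LaurentPolynomial ℂ))))⁆ :
          LieIdeal ℂ (Matrix (Fin (n * d)) (Fin (n * d))
            (Polynomial (LaurentPolynomial ℂ))))) := by
  have : NeZero d := ⟨hd.ne'⟩
  let blocks : Fin n × ZMod d ≃ Fin (n * d) :=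
    (Equiv.prodCongr (.refl _) (ZMod.finEquiv d).symm.toEquiv).trans finProdFinEquiv
  let e : Matrix (Fin n) (Fin n) B ≃ₐ[ℂ]
      Matrix (Fin (n * d)) (Fin (n * d)) (LaurentPolynomial ℂ)[X] :=
    ((S.toMatrixAlgEquiv hζ).mapMatrix.trans (Matrix.compAlgEquiv _ _ _ ℂ)).trans
      (Matrix.reindexAlgEquiv ℂ _ blocks)
  exact ⟨e.toLieEquiv.derivedAlgebraEquiv⟩

theorem stmt_12 (d : ℕ) (hd : 0 < d) (ζ : ℂ) (hζ : IsPrimitiveRoot ζ d)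
    (B : Type) [Ring B] [Algebra ℂ B] (S : SkewMixedAlgebra d ζ B)
    (n : ℕ) (hn : 1 ≤ n) :
    Nonempty
      ((⁅(⊤ : LieIdeal ℂ (Matrix (Fin n) (Fin n) B)),
          (⊤ : LieIdeal ℂ (Matrix (Fin n) (Fin n) B))⁆ :
          LieIdeal ℂ (Matrix (Fin n) (Fin n) B))
        ≃ₗ⁅ℂ⁆
        (⁅(⊤ : LieIdeal ℂ (Matrix (Fin (n * d)) (Fin (n * d))
              (Polynomial (LaurentPolynomial ℂ)))),
          (⊤ : LieIdeal ℂ (Matrix (Fin (n * d)) (Fin (n * d))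
              (Polynomial (LaurentPolynomial ℂ))))⁆ :
          LieIdeal ℂ (Matrix (Fin (n * d)) (Fin (n * d))
            (Polynomial (LaurentPolynomial ℂ))))) :=
  stmt_12_general d hd ζ hζ B S n
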